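/- arXiv:2406.18407 — 5 statements merged into one kernel-verified Lean document; each statement's English description precedes it below -/
import Mathlib

section
/- Let M be an n×n integer matrix that is invertible over the integers (i.e., det M = ±1). If every complex eigenvalue of M has absolute value equal to 1, then every eigenvalue of M is a root of unity. -/
/-!
An eigenvalue `z` of an integer matrix is a root of the monic integer characteristic polynomial,
hence an algebraic integer, and its Galois conjugates (the roots of its minimal polynomial over `ℚ`)
are again eigenvalues, so all of them have absolute value `1`. The powers of `z` are then algebraic
integers of bounded degree with bounded conjugates, so their minimal polynomials have bounded
integer coefficients; there are finitely many such powers, so `z ^ a = z ^ b` for some `a ≠ b`.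
-/

open Polynomial NumberField.Embeddings IntermediateField

theorem Complex.pow_eq_one_of_isIntegral_of_minpoly_roots_norm_eq_one {z : ℂ}
    (hz : IsIntegral ℤ z) (hconj : ∀ w : ℂ, aeval w (minpoly ℚ z) = 0 → ‖w‖ = 1) :
    ∃ k : ℕ, 0 < k ∧ z ^ k = 1 := by
  have : FiniteDimensional ℚ ℚ⟮z⟯ := adjoin.finiteDimensional hz.tower_top
  have : NumberField ℚ⟮z⟯ := ⟨⟩
  have hgen : algebraMap ℚ⟮z⟯ ℂ (AdjoinSimple.gen ℚ z) = z := AdjoinSimple.algebraMap_gen ℚ z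
  obtain ⟨k, hk, hgen_pow⟩ := pow_eq_one_of_norm_eq_one ℚ⟮z⟯ ℂ (x := AdjoinSimple.gen ℚ z)
    (by rwa [← isIntegral_algebraMap_iff (algebraMap ℚ⟮z⟯ ℂ).injective, hgen])
    (fun φ ↦ hconj _ <| by rw [← minpoly_gen]; exact minpoly.aeval_algHom ℚ φ.toRatAlgHom _)
  exact ⟨k, hk, by rw [← hgen, ← map_pow, hgen_pow, map_one]⟩

theorem Polynomial.pow_eq_one_of_monic_of_roots_norm_eq_one {p : ℤ[X]} (hp : p.Monic)
    (hroots : ∀ w : ℂ, aeval w p = 0 → ‖w‖ = 1) {z : ℂ} (hz : aeval z p = 0) :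
    ∃ k : ℕ, 0 < k ∧ z ^ k = 1 := by
  have hdvd : minpoly ℚ z ∣ p.map (algebraMap ℤ ℚ) :=
    minpoly.dvd ℚ z (by rwa [aeval_map_algebraMap])
  refine Complex.pow_eq_one_of_isIntegral_of_minpoly_roots_norm_eq_one ⟨p, hp, hz⟩ fun w hw ↦ ?_
  exact hroots w (by rw [← aeval_map_algebraMap ℚ, aeval_eq_zero_of_dvd_aeval_eq_zero hdvd hw])

theorem kronecker_roots_of_unity_general (n : ℕ) (M : Matrix (Fin n) (Fin n) ℤ)
    (habs : ∀ z : ℂ, (M.map (Int.cast : ℤ → ℂ)).charpoly.IsRoot z → ‖z‖ = 1) :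
    ∀ z : ℂ, (M.map (Int.cast : ℤ → ℂ)).charpoly.IsRoot z → ∃ k : ℕ, 0 < k ∧ z ^ k = 1 := by
  have hroot (z : ℂ) : (M.map (Int.cast : ℤ → ℂ)).charpoly.IsRoot z ↔ aeval z M.charpoly = 0 := by
    rw [← eval_map_algebraMap, algebraMap_int_eq, ← M.charpoly_map, IsRoot.def]
    rfl
  intro z hz
  exact pow_eq_one_of_monic_of_roots_norm_eq_one M.charpoly_monic
    (fun w hw ↦ habs w ((hroot w).2 hw)) ((hroot z).1 hz)

/-- Kronecker's theorem: if an integer matrix is invertible over ℤ and all its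
complex eigenvalues have absolute value 1, then all its eigenvalues are roots of unity. -/
theorem kronecker_roots_of_unity (n : ℕ) (M : Matrix (Fin n) (Fin n) ℤ)
    (hM : IsUnit M.det)
    (habs : ∀ z : ℂ, (M.map (Int.cast : ℤ → ℂ)).charpoly.IsRoot z → ‖z‖ = 1) :
    ∀ z : ℂ, (M.map (Int.cast : ℤ → ℂ)).charpoly.IsRoot z → ∃ k : ℕ, 0 < k ∧ z ^ k = 1 :=
  kronecker_roots_of_unity_general n M habs
end

section
/- Let k be a field of characteristic 2, let μ ∈ k, and let b₃ ∈ k[s,t] be a polynomial in two variables satisfying b₃² + s·t²·b₃ = (1 + μ⁶)·t⁶. Then μ⁶ = 1, and b₃ = 0 or b₃ = s·t². -/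
open Polynomial in
lemma aux_univ_char_two (k : Type*) [Field k] (c : k) (p : Polynomial k)
    (h : p * (p + Polynomial.X) = Polynomial.C c) : c = 0 := by
  by_contra hc
  have hC : (Polynomial.C c : Polynomial k) ≠ 0 := by simpa using hc
  have hp : p ≠ 0 := by rintro rfl; simp at h; exact hC h.symm
  have hq : p + Polynomial.X ≠ 0 := by
    intro h0; rw [h0, mul_zero] at h; exact hC h.symm
  have hdeg : p.natDegree + (p + Polynomial.X).natDegree = 0 := by
    rw [← Polynomial.natDegree_mul hp hq, h, Polynomial.natDegree_C]
  have hp0 : p.natDegree = 0 := by omega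
  have hq0 : (p + Polynomial.X).natDegree = 0 := by omega
  have hpc : p = Polynomial.C (p.coeff 0) := Polynomial.eq_C_of_natDegree_eq_zero hp0
  rw [hpc, add_comm, Polynomial.natDegree_X_add_C] at hq0
  exact one_ne_zero hq0

/-- In characteristic 2, if b₃ ∈ k[s,t] satisfies b₃² + st²·b₃ = (1 + μ⁶)t⁶,
then μ⁶ = 1 and b₃ ∈ {0, st²}. -/
theorem char_two_polynomial_identity (k : Type*) [Field k] [CharP k 2] (mu : k)
    (b₃ : MvPolynomial (Fin 2) k)
    (h : b₃ ^ 2 + MvPolynomial.X 0 * MvPolynomial.X 1 ^ 2 * b₃ =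
      MvPolynomial.C (1 + mu ^ 6) * MvPolynomial.X 1 ^ 6) :
    mu ^ 6 = 1 ∧ (b₃ = 0 ∨ b₃ = MvPolynomial.X 0 * MvPolynomial.X 1 ^ 2) := by
  have h2 : (2 : k) = 0 := by exact_mod_cast CharP.cast_eq_zero k 2
  -- evaluate at t = 1, s = X
  set φ : MvPolynomial (Fin 2) k →ₐ[k] Polynomial k :=
    MvPolynomial.aeval (fun i : Fin 2 => if i = 0 then Polynomial.X else 1) with hφ
  have hφ0 : φ (MvPolynomial.X 0) = Polynomial.X := by simp [hφ]
  have hφ1 : φ (MvPolynomial.X 1) = 1 := by simp [hφ]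
  have hevC : φ (MvPolynomial.C (1 + mu ^ 6)) = Polynomial.C (1 + mu ^ 6) := by
    simp [hφ, Polynomial.algebraMap_eq]
  have hev := congrArg φ h
  simp only [map_add, map_mul, map_pow, hφ0, hφ1, hevC] at hev
  have hkey : φ b₃ * (φ b₃ + Polynomial.X) = Polynomial.C (1 + mu ^ 6) := by
    rw [mul_add, ← sq, mul_comm (φ b₃) Polynomial.X]
    simpa using hev
  have hc : (1 : k) + mu ^ 6 = 0 := aux_univ_char_two k _ _ hkey
  have hmu : mu ^ 6 = 1 := by linear_combination hc - h2
  refine ⟨hmu, ?_⟩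
  rw [hc] at h
  simp only [map_zero, zero_mul] at h
  have hfac : b₃ * (b₃ + MvPolynomial.X 0 * MvPolynomial.X 1 ^ 2) = 0 := by
    rw [mul_add, ← sq, mul_comm b₃]; exact h
  rcases mul_eq_zero.mp hfac with h0 | h1
  · exact Or.inl h0
  · right
    have := eq_neg_of_add_eq_zero_left h1
    rw [this, CharTwo.neg_eq]
end

section
/- There is no even, negative definite integral lattice L of rank 2 with 2·L^∨ ⊆ L (i.e., L is 2-elementary) that contains two orthogonal vectors u, v with u·u = −4 and v·v = −8 spanning a finite-index subgroup of L. Equivalently: the lattice with Gram matrix diag(−4, −8) admits no 2-elementary overlattice of rank 2. -/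
private lemma key_div (p q r : ℤ) (h : 2*p^2 + q^2 = 16*r) : (4:ℤ) ∣ p := by
  have hz : ∀ x y : ZMod 16, 2*x^2+y^2 = 0 → x = 0 ∨ x = 4 ∨ x = 8 ∨ x = 12 := by decide
  have h16 : ((p : ZMod 16)) = 0 ∨ (p : ZMod 16) = 4 ∨ (p : ZMod 16) = 8 ∨ (p : ZMod 16) = 12 := by
    apply hz _ (q : ZMod 16)
    have : ((2*p^2 + q^2 : ℤ) : ZMod 16) = ((16*r : ℤ) : ZMod 16) := by rw [h]
    push_cast at this
    simpa [show (16:ZMod 16) = 0 by decide] using this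
  have hmod : p % 16 = 0 % 16 ∨ p % 16 = 4 % 16 ∨ p % 16 = 8 % 16 ∨ p % 16 = 12 % 16 := by
    rcases h16 with h' | h' | h' | h'
    · exact Or.inl ((ZMod.intCast_eq_intCast_iff p 0 16).mp (by exact_mod_cast h'))
    · exact Or.inr (Or.inl ((ZMod.intCast_eq_intCast_iff p 4 16).mp (by exact_mod_cast h')))
    · exact Or.inr (Or.inr (Or.inl ((ZMod.intCast_eq_intCast_iff p 8 16).mp (by exact_mod_cast h'))))
    · exact Or.inr (Or.inr (Or.inr ((ZMod.intCast_eq_intCast_iff p 12 16).mp (by exact_mod_cast h'))))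
  omega


/-- The even negative definite lattice with Gram matrix diag(−4, −8) admits no
2-elementary even overlattice of rank 2. -/
theorem no_two_elementary_overlattice :
    ¬∃ (B : LinearMap.BilinForm ℚ (Fin 2 → ℚ)) (L : Submodule ℤ (Fin 2 → ℚ))
      (u v : Fin 2 → ℚ),
      (∀ x y, B x y = B y x) ∧
      -- integrality: the form takes integer values on L
      (∀ x ∈ L, ∀ y ∈ L, ∃ m : ℤ, B x y = (m : ℚ)) ∧
      -- evenness
      (∀ x ∈ L, ∃ m : ℤ, B x x = 2 * (m : ℚ)) ∧
      u ∈ L ∧ v ∈ L ∧ B u v = 0 ∧ B u u = -4 ∧ B v v = -8 ∧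
      -- u, v span a finite-index subgroup of L (full rank 2)
      Submodule.span ℚ ({u, v} : Set (Fin 2 → ℚ)) = ⊤ ∧
      -- 2-elementary: 2·L^∨ ⊆ L
      (∀ x : Fin 2 → ℚ, (∀ y ∈ L, ∃ m : ℤ, B x y = (m : ℚ)) → (2 : ℚ) • x ∈ L) := by
  rintro ⟨B, L, u, v, hsymm, hint, heven, huL, hvL, huv, huu, hvv, hspan, h2⟩
  have hvu : B v u = 0 := (hsymm v u).trans huv
  -- (1/4)•u pairs integrally with all of L
  have hdual : ∀ y ∈ L, ∃ m : ℤ, B ((1/4 : ℚ) • u) y = (m : ℚ) := by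
    intro y hy
    obtain ⟨α, β, hy'⟩ := Submodule.mem_span_pair.mp
      (hspan ▸ Submodule.mem_top : y ∈ Submodule.span ℚ ({u, v} : Set (Fin 2 → ℚ)))
    obtain ⟨p, hp⟩ := hint u huL y hy
    obtain ⟨q, hq⟩ := hint v hvL y hy
    obtain ⟨r, hr⟩ := heven y hy
    have hBu : B u y = α * (-4) := by
      rw [← hy']; simp [huu, huv]
    have hBv : B v y = β * (-8) := by
      rw [← hy']; simp [hvv, hvu]
    have hα : α = -(p : ℚ)/4 := by rw [hp] at hBu; linarith
    have hβ : β = -(q : ℚ)/8 := by rw [hq] at hBv; linarith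
    have hByy : B y y = α * (p : ℚ) + β * (q : ℚ) := by
      have h' : B y y = B (α • u + β • v) y := by rw [hy']
      rw [h']
      simp only [map_add, map_smul, LinearMap.add_apply, LinearMap.smul_apply,
        smul_eq_mul, hp, hq]
    have hQ : (2 * p^2 + q^2 : ℚ) = 16 * (-r : ℤ) := by
      rw [hByy, hα, hβ] at hr
      push_cast
      field_simp at hr ⊢
      linarith
    have hZ : 2 * p^2 + q^2 = 16 * (-r) := by exact_mod_cast hQ
    obtain ⟨k, hk⟩ := key_div p q (-r) hZ
    refine ⟨k, ?_⟩
    rw [map_smul]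
    simp [hp, hk]
  have hmem := h2 _ hdual
  have hw : (1/2 : ℚ) • u ∈ L := by
    have : (2 : ℚ) • (1/4 : ℚ) • u = (1/2 : ℚ) • u := by
      rw [smul_smul]; norm_num
    rwa [this] at hmem
  obtain ⟨m, hm⟩ := heven _ hw
  have : B ((1/2:ℚ) • u) ((1/2:ℚ) • u) = -1 := by
    simp [huu]
    norm_num
  rw [this] at hm
  have : (2 * m : ℤ) = -1 := by exact_mod_cast hm.symm
  omega
end

section
/- Let L be a unimodular integral lattice (i.e., the bilinear form induces an isomorphism L ≅ L^∨) and let σ be an isometry of L with σ² = id. Let L^σ = {x ∈ L : σ(x) = x} be the invariant lattice. Then L^σ is 2-elementary: for every x ∈ L^σ ⊗ ℚ such that x·y ∈ ℤ for all y ∈ L^σ, one has 2x ∈ L^σ. -/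
/-- The invariant lattice of an involution of a unimodular integral lattice is 2-elementary:
if x lies in the ℚ-span of L^σ and pairs integrally with every element of L^σ, then 2x ∈ L^σ. -/
theorem invariant_lattice_two_elementary (V : Type*) [AddCommGroup V] [Module ℚ V]
    [FiniteDimensional ℚ V] (B : LinearMap.BilinForm ℚ V)
    (hsymm : ∀ x y, B x y = B y x)
    (L : Submodule ℤ V) (hspan : Submodule.span ℚ (L : Set V) = ⊤)
    -- integrality of the form on L
    (hint : ∀ x ∈ L, ∀ y ∈ L, ∃ m : ℤ, B x y = (m : ℚ))
    -- unimodularity: the dual lattice of L equals L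
    (hunim : ∀ x : V, (∀ y ∈ L, ∃ m : ℤ, B x y = (m : ℚ)) → x ∈ L)
    (σ : V ≃ₗ[ℚ] V) (hσB : ∀ x y, B (σ x) (σ y) = B x y)
    (hσL : ∀ x, x ∈ L ↔ σ x ∈ L) (hσ2 : ∀ x, σ (σ x) = x) :
    ∀ x ∈ Submodule.span ℚ {y : V | y ∈ L ∧ σ y = y},
      (∀ y ∈ L, σ y = y → ∃ m : ℤ, B x y = (m : ℚ)) →
      ((2 : ℚ) • x ∈ L ∧ σ ((2 : ℚ) • x) = (2 : ℚ) • x) := by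
  intro x hx hxint
  -- σ fixes x, since x is in the span of fixed vectors
  have hfixall : ∀ z ∈ Submodule.span ℚ {y : V | y ∈ L ∧ σ y = y}, σ z = z := by
    intro z hz
    induction hz using Submodule.span_induction with
    | mem y hy => exact hy.2
    | zero => simp
    | add y z _ _ hy hz => simp [map_add, hy, hz]
    | smul a y _ hy => simp [map_smul, hy]
  have hfix : σ x = x := hfixall x hx
  refine ⟨?_, by rw [map_smul, hfix]⟩
  apply hunim
  intro y hy
  have hyσ : σ y ∈ L := (hσL y).1 hy
  have hmem : y + σ y ∈ L := L.add_mem hy hyσ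
  have hfixed : σ (y + σ y) = y + σ y := by
    rw [map_add, hσ2]; abel
  obtain ⟨m, hm⟩ := hxint (y + σ y) hmem hfixed
  refine ⟨m, ?_⟩
  have hBσ : B x (σ y) = B x y := by
    conv_rhs => rw [← hσB x y, hfix]
  rw [map_add, hBσ] at hm
  rw [map_smul]
  simp only [LinearMap.smul_apply, smul_eq_mul]
  linarith
end

section
/- Let V be a finite-dimensional real vector space with a nondegenerate symmetric bilinear form of signature (1, n), and let g be an isometry of V fixing a nonzero isotropic vector v (i.e., g(v) = v and ⟨v, v⟩ = 0). Then every complex eigenvalue of g has absolute value 1. -/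
/-!
Let `h(x, y) = x̄ᵀ J y` be the Hermitian extension of the Lorentz form, `J = diag(1, -1, …, -1)`.
If the complexified isometry had an eigenvector `w` with eigenvalue `z`, `‖z‖ ≠ 1`, invariance
of `h` would give `h(w, w) = |z|² h(w, w)` and `h(v, w) = z h(v, w)`, so `w` is null and
orthogonal to the fixed null vector `v`. In signature `(1, n)` this forces `w` to be proportional
to `v` (the equality case of Cauchy–Schwarz on the last `n` coordinates), hence `w` is fixed and
`z = 1`.
-/

open Matrix
open scoped ComplexOrder

namespace Matrix

variable {ι R : Type*} [Fintype ι]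

theorem transpose_mul_mul_self_eq_of_dotProduct_mulVec [DecidableEq ι] [CommSemiring R]
    {A M : Matrix ι ι R} (h : ∀ x y, M *ᵥ x ⬝ᵥ A *ᵥ (M *ᵥ y) = x ⬝ᵥ A *ᵥ y) :
    Mᵀ * A * M = A := by
  apply (toLinearMap₂' R (S₁ := R) (S₂ := R)).injective
  rw [← toLinearMap₂'_comp]
  refine LinearMap.ext₂ fun x y => ?_
  simp only [LinearMap.compl₁₂_apply, toLinearMap₂'_apply', toLin'_apply, h]

theorem conjTranspose_map_ofReal_mul_mul_self {A M : Matrix ι ι ℝ} (h : Mᵀ * A * M = A) :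
    (M.map Complex.ofReal)ᴴ * A.map Complex.ofReal * M.map Complex.ofReal =
      A.map Complex.ofReal := by
  rw [← conjTranspose_map _ fun _ => (Complex.conj_ofReal _).symm,
    conjTranspose_eq_transpose_of_trivial]
  have := congrArg (·.map Complex.ofRealHom) h
  simp only [Matrix.map_mul] at this
  exact this

theorem star_mulVec_dotProduct_mulVec_mulVec [Semiring R] [StarRing R] {G A : Matrix ι ι R}
    (h : Aᴴ * G * A = G) (x y : ι → R) :
    star (A *ᵥ x) ⬝ᵥ G *ᵥ (A *ᵥ y) = star x ⬝ᵥ G *ᵥ y := by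
  rw [star_mulVec, ← dotProduct_mulVec, mulVec_mulVec, mulVec_mulVec, h]

theorem exists_mulVec_eq_smul_of_isRoot_charpoly [DecidableEq ι] [CommRing R] [IsDomain R]
    {A : Matrix ι ι R} {z : R} (hz : A.charpoly.IsRoot z) : ∃ w ≠ 0, A *ᵥ w = z • w := by
  obtain ⟨w, hw⟩ := ((Module.End.hasEigenvalue_iff_isRoot_charpoly (toLin' A) z).2
    (by rwa [charpoly_toLin'])).exists_hasEigenvector
  exact ⟨w, hw.2, hw.apply_eq_smul⟩

variable [CommRing R] [StarRing R] [NoZeroDivisors R]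
  {G A : Matrix ι ι R} {v w : ι → R} {z : R}

theorem star_dotProduct_mulVec_self_eq_zero_of_mulVec_eq_smul (h : Aᴴ * G * A = G)
    (hw : A *ᵥ w = z • w) (hz : star z * z ≠ 1) : star w ⬝ᵥ G *ᵥ w = 0 := by
  have := star_mulVec_dotProduct_mulVec_mulVec h w w
  rw [hw, star_smul, mulVec_smul, smul_dotProduct, dotProduct_smul, smul_smul, smul_eq_mul,
    ← sub_eq_zero, ← sub_one_mul] at this
  exact (mul_eq_zero.1 this).resolve_left (sub_ne_zero.2 hz)

theorem star_dotProduct_mulVec_eq_zero_of_mulVec_eq_smul (h : Aᴴ * G * A = G)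
    (hv : A *ᵥ v = v) (hw : A *ᵥ w = z • w) (hz : z ≠ 1) : star v ⬝ᵥ G *ᵥ w = 0 := by
  have := star_mulVec_dotProduct_mulVec_mulVec h v w
  rw [hv, hw, mulVec_smul, dotProduct_smul, smul_eq_mul, ← sub_eq_zero, ← sub_one_mul] at this
  exact (mul_eq_zero.1 this).resolve_left (sub_ne_zero.2 hz)

theorem eq_one_of_mulVec_eq_smul_of_smul_eq_smul {K : Type*} [Field K] {A : Matrix ι ι K}
    {v w : ι → K} {z a b : K} (hv : A *ᵥ v = v) (hw : A *ᵥ w = z • w) (hw0 : w ≠ 0)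
    (ha : a ≠ 0) (hab : a • w = b • v) : z = 1 := by
  have : a • z • w = a • (1 : K) • w := by
    rw [one_smul, ← hw, ← mulVec_smul, hab, mulVec_smul, hv]
  exact smul_left_injective K hw0 (smul_right_injective _ ha this)

end Matrix

theorem star_mul_self_ne_one_of_norm_ne_one {K : Type*} [RCLike K] {z : K} (hz : ‖z‖ ≠ 1) :
    star z * z ≠ 1 := by
  rw [RCLike.star_def, RCLike.conj_mul]
  exact_mod_cast (pow_eq_one_iff_of_nonneg (norm_nonneg z) two_ne_zero).not.2 hz

section Lorentz

variable {R : Type*} {n : ℕ}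

def lorentzGram (R : Type*) [Ring R] (n : ℕ) : Matrix (Fin (n + 1)) (Fin (n + 1)) R :=
  diagonal (Fin.cons 1 fun _ => -1)

theorem lorentzGram_map {S : Type*} [Ring R] [Ring S] (f : R →+* S) :
    (lorentzGram R n).map f = lorentzGram S n := by
  rw [lorentzGram, diagonal_map (map_zero f), lorentzGram]
  congr with i
  cases i using Fin.cases <;> simp

theorem dotProduct_lorentzGram_mulVec [Ring R] (x y : Fin (n + 1) → R) :
    x ⬝ᵥ lorentzGram R n *ᵥ y = x 0 * y 0 - Fin.tail x ⬝ᵥ Fin.tail y := by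
  simp [lorentzGram, dotProduct, mulVec_diagonal, Fin.sum_univ_succ, Fin.tail, sub_eq_add_neg]

theorem star_dotProduct_lorentzGram_mulVec [Ring R] [StarRing R] (x y : Fin (n + 1) → R) :
    star x ⬝ᵥ lorentzGram R n *ᵥ y = star (x 0) * y 0 - star (Fin.tail x) ⬝ᵥ Fin.tail y :=
  dotProduct_lorentzGram_mulVec _ _

variable [CommRing R] [PartialOrder R] [StarRing R] [StarOrderedRing R] [NoZeroDivisors R]
  {v w : Fin (n + 1) → R}

theorem head_ne_zero_of_lorentz_isotropic (hv : v ≠ 0)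
    (hvv : star v ⬝ᵥ lorentzGram R n *ᵥ v = 0) : v 0 ≠ 0 := by
  intro h0
  rw [star_dotProduct_lorentzGram_mulVec, h0, star_zero, zero_mul, zero_sub, neg_eq_zero] at hvv
  apply hv
  funext i
  cases i using Fin.cases with
  | zero => exact h0
  | succ i => exact congrFun (dotProduct_star_self_eq_zero.1 hvv) i

theorem smul_eq_smul_of_lorentz_isotropic (hvv : star v ⬝ᵥ lorentzGram R n *ᵥ v = 0)
    (hvw : star v ⬝ᵥ lorentzGram R n *ᵥ w = 0) (hww : star w ⬝ᵥ lorentzGram R n *ᵥ w = 0) :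
    v 0 • w = w 0 • v := by
  set d := v 0 • Fin.tail w - w 0 • Fin.tail v
  have hd : star d ⬝ᵥ d = 0 := by
    rw [star_dotProduct_lorentzGram_mulVec] at hvv hvw hww
    have hwv : star (Fin.tail w) ⬝ᵥ Fin.tail v = star (w 0) * v 0 := by
      rw [star_dotProduct, ← sub_eq_zero.1 hvw, star_mul, star_star]
    simp only [d, star_sub, star_smul, sub_dotProduct, dotProduct_sub, smul_dotProduct,
      dotProduct_smul, smul_eq_mul, hwv]
    linear_combination (star (w 0) * v 0) * hvw - (star (v 0) * v 0) * hww
      - (star (w 0) * w 0) * hvv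
  funext i
  cases i using Fin.cases with
  | zero => exact mul_comm _ _
  | succ i => exact sub_eq_zero.1 (congrFun (dotProduct_star_self_eq_zero.1 hd) i)

end Lorentz

theorem parabolic_isometry_eigenvalues_abs_one_general (n : ℕ)
    (B : (Fin (n + 1) → ℝ) → (Fin (n + 1) → ℝ) → ℝ)
    -- B is the standard bilinear form of signature (1, n)
    (hB : ∀ x y, B x y = x 0 * y 0 - ∑ i : Fin n, x i.succ * y i.succ)
    (M : Matrix (Fin (n + 1)) (Fin (n + 1)) ℝ)
    (hiso : ∀ x y, B (M.mulVec x) (M.mulVec y) = B x y)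
    (v : Fin (n + 1) → ℝ) (hv : v ≠ 0) (hvv : B v v = 0) (hfix : M.mulVec v = v) :
    ∀ z : ℂ, (M.map (Complex.ofReal : ℝ → ℂ)).charpoly.IsRoot z → ‖z‖ = 1 := by
  intro z hz
  have hB' : ∀ x y, B x y = x ⬝ᵥ lorentzGram ℝ n *ᵥ y := fun x y => by
    rw [hB, dotProduct_lorentzGram_mulVec]
    rfl
  set Mc := M.map Complex.ofReal
  set vc : Fin (n + 1) → ℂ := Complex.ofReal ∘ v
  have hMc : Mcᴴ * lorentzGram ℂ n * Mc = lorentzGram ℂ n := by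
    rw [← lorentzGram_map Complex.ofRealHom]
    refine conjTranspose_map_ofReal_mul_mul_self
      (transpose_mul_mul_self_eq_of_dotProduct_mulVec ?_)
    simpa only [hB'] using hiso
  have hvc : Mc *ᵥ vc = vc := funext fun i =>
    (RingHom.map_mulVec Complex.ofRealHom M v i).symm.trans (congrArg _ (congrFun hfix i))
  have hvc_null : star vc ⬝ᵥ lorentzGram ℂ n *ᵥ vc = 0 := by
    rw [star_dotProduct_lorentzGram_mulVec]
    simpa [vc, dotProduct, Fin.tail] using congrArg Complex.ofReal ((hB v v).symm.trans hvv)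
  have hvc0 : vc 0 ≠ 0 := Complex.ofReal_ne_zero.2
    (head_ne_zero_of_lorentz_isotropic hv (by simpa [hB'] using hvv))
  obtain ⟨w, hw0, hw⟩ := exists_mulVec_eq_smul_of_isRoot_charpoly hz
  by_contra hz1
  have hww := star_dotProduct_mulVec_self_eq_zero_of_mulVec_eq_smul hMc hw
    (star_mul_self_ne_one_of_norm_ne_one hz1)
  have hvw := star_dotProduct_mulVec_eq_zero_of_mulVec_eq_smul hMc hvc hw
    (by rintro rfl; exact hz1 norm_one)
  have hwv := smul_eq_smul_of_lorentz_isotropic hvc_null hvw hww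
  exact hz1 (by rw [eq_one_of_mulVec_eq_smul_of_smul_eq_smul hvc hw hw0 hvc0 hwv, norm_one])

/-- An isometry of a real quadratic space of signature (1, n) fixing a nonzero isotropic
vector has all complex eigenvalues of absolute value 1 (i.e., it is of zero entropy). -/
theorem parabolic_isometry_eigenvalues_abs_one (n : ℕ)
    (B : (Fin (n + 1) → ℝ) → (Fin (n + 1) → ℝ) → ℝ)
    -- B is the standard bilinear form of signature (1, n)
    (hB : ∀ x y, B x y = x 0 * y 0 - ∑ i : Fin n, x i.succ * y i.succ)
    (M : Matrix (Fin (n + 1)) (Fin (n + 1)) ℝ) (hM : IsUnit M.det)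
    (hiso : ∀ x y, B (M.mulVec x) (M.mulVec y) = B x y)
    (v : Fin (n + 1) → ℝ) (hv : v ≠ 0) (hvv : B v v = 0) (hfix : M.mulVec v = v) :
    ∀ z : ℂ, (M.map (Complex.ofReal : ℝ → ℂ)).charpoly.IsRoot z → ‖z‖ = 1 :=
  parabolic_isometry_eigenvalues_abs_one_general n B hB M hiso v hv hvv hfix
end
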